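/- (Lemma 5.) Under Assumptions B', C' and D, there is a constant c, not depending on j, j₀, k, such that for all j₀, j ≥ 0 and all admissible k: c_{j₀k}² ≤ c·2^{-j₀} and E[d_{jk}²] ≤ c·2^{-2j}, where c_{j₀k} = 2^{j₀/2}∫₀¹ 1_{j₀k}(s) g(X_s)σ(X_s) ds and d_{jk} = ∫₀¹ ψ_{jk}(s) g(X_s)σ(X_s) ds. -/

import Mathlib

/-!
With `φ = (g σ) ∘ h`, both coefficients are Haar coefficients of `s ↦ φ (W s)`. Since
`h' = σ ∘ h` and `g σ` have bounded derivatives, `φ` is bounded and Lipschitz, say by `M` and `L`.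
The scaling coefficient is `2^{j/2}` times the integral of a function bounded by `M` over an
interval of length `2^{-j}`, hence `c_{jk}² ≤ M² 2^{-j}` pathwise. The wavelet `ψ_{jk}` has mean
zero on its support `(a, a + 2^{-j}]`, so `φ (W a)` may be subtracted; the Lipschitz bound and
Cauchy–Schwarz give `d_{jk}² ≤ L² ∫_a^{a+2^{-j}} (W s - W a)² ds`, and
`E (W s - W a)² = s - a ≤ 2^{-j}` bounds the expectation by `L² 2^{-2j}`.
-/

open MeasureTheory ProbabilityTheory Real Filter
open scoped ENNReal NNReal

noncomputable section

namespace RoundOff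

/-- `W` is a standard Brownian motion on `(Ω, 𝔉, ℙ)`: it starts at `0`, has continuous
paths, Gaussian increments `W t - W s ∼ N(0, t - s)` and independent increments. -/
def IsStdBM {Ω : Type*} [MeasureSpace Ω] (W : ℝ → Ω → ℝ) : Prop :=
  (∀ t, Measurable (W t)) ∧
  (∀ ω, W 0 ω = 0) ∧
  (∀ ω, Continuous fun t => W t ω) ∧
  (∀ s t : ℝ, 0 ≤ s → s ≤ t →
    Measure.map (fun ω => W t ω - W s ω) ℙ = gaussianReal 0 (Real.toNNReal (t - s))) ∧
  ∀ (n : ℕ) (t : Fin (n + 1) → ℝ), Monotone t → (∀ i, 0 ≤ t i) →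
    iIndepFun
      (fun i : Fin n => fun ω => W (t i.succ) ω - W (t i.castSucc) ω) ℙ

/-- Assumption A: `α` is positive, decreasing to `0` and `sup_n α_n (log n)² < ∞`. -/
def AssumptionA (α : ℕ → ℝ) : Prop :=
  (∀ n, 0 < α n) ∧ Antitone α ∧ Tendsto α atTop (nhds 0) ∧
  ∃ C, ∀ n : ℕ, α n * Real.log n ^ 2 ≤ C

/-- Assumption A1 (with exponent `ρ`): `α` is positive, decreasing to `0` and
`sup_n α_n^{1-ρ} (log n)² < ∞`. -/
def AssumptionA1 (α : ℕ → ℝ) (ρ : ℝ) : Prop :=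
  (∀ n, 0 < α n) ∧ Antitone α ∧ Tendsto α atTop (nhds 0) ∧ 0 < ρ ∧
  ∃ C, ∀ n : ℕ, α n ^ (1 - ρ) * Real.log n ^ 2 ≤ C

/-- Assumption B': `σ` is C² with `σ, σ', σ''` bounded and `σ ≥ c₀ > 0`. -/
def AssumptionBp (σ : ℝ → ℝ) : Prop :=
  ContDiff ℝ 2 σ ∧
  (∃ C, ∀ x, |σ x| ≤ C ∧ |deriv σ x| ≤ C ∧ |deriv (deriv σ) x| ≤ C) ∧
  ∃ c₀ > 0, ∀ x, c₀ ≤ σ x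

/-- Assumption C': `g` is C² with `g, g', g''` bounded and `g ≥ c₁ > 0`. -/
def AssumptionCp (g : ℝ → ℝ) : Prop :=
  ContDiff ℝ 2 g ∧
  (∃ C, ∀ x, |g x| ≤ C ∧ |deriv g x| ≤ C ∧ |deriv (deriv g) x| ≤ C) ∧
  ∃ c₁ > 0, ∀ x, c₁ ≤ g x

/-- Assumption C1': C' together with: `g'` of constant sign and `|g'|^{1/2}` C² with
bounded derivatives. -/
def AssumptionC1p (g : ℝ → ℝ) : Prop :=
  AssumptionCp g ∧
  ((∀ x, 0 ≤ deriv g x) ∨ (∀ x, deriv g x ≤ 0)) ∧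
  ContDiff ℝ 2 (fun x => Real.sqrt |deriv g x|) ∧
  ∃ C, ∀ x, |deriv (fun x => Real.sqrt |deriv g x|) x| ≤ C ∧
            |deriv (deriv (fun x => Real.sqrt |deriv g x|)) x| ≤ C

/-- Assumption D (via the representation `X = h ∘ W`): `h` solves `h' = σ ∘ h`, `h 0 = x₀`,
i.e. `h = S⁻¹(· + S x₀)` with `S(x) = ∫₀ˣ dy/σ(y)`. -/
def IsScaleFun (σ : ℝ → ℝ) (x₀ : ℝ) (h : ℝ → ℝ) : Prop :=
  h 0 = x₀ ∧ ∀ x, HasDerivAt h (σ (h x)) x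

def beta (α : ℕ → ℝ) (n : ℕ) : ℝ := α n * Real.sqrt n

/-- `r_n = max (α_n, n^{-1/2})`. -/
def rr (α : ℕ → ℝ) (n : ℕ) : ℝ := max (α n) (1 / Real.sqrt n)

/-- Round-off of `x` at level `a`: `a ⌊x / a⌋`. -/
def rnd (a x : ℝ) : ℝ := a * (⌊x / a⌋ : ℤ)

/-- `1_{jk}`: indicator of `(k 2^{-j}, (k+1) 2^{-j}]`. -/
def ind (j k : ℕ) (s : ℝ) : ℝ :=
  Set.indicator (Set.Ioc ((k : ℝ) / 2 ^ j) (((k : ℝ) + 1) / 2 ^ j)) 1 s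

/-- The Haar-type wavelet: `-1` on `[0,1/2]`, `+1` on `(1/2,1]`, `0` elsewhere. -/
def psi (s : ℝ) : ℝ :=
  Set.indicator (Set.Ioc (1 / 2 : ℝ) 1) 1 s - Set.indicator (Set.Icc (0 : ℝ) (1 / 2)) 1 s

def psijk (j k : ℕ) (s : ℝ) : ℝ := (2 : ℝ) ^ ((j : ℝ) / 2) * psi (2 ^ j * s - (k : ℝ))

/-- `G(u) = ∫₀ᵘ ψ` -/
def Gpsi (u : ℝ) : ℝ := ∫ v in (0 : ℝ)..u, psi v

/-- `c(ψ) = ∫₀¹ G(u)² du` -/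
def cpsi : ℝ := ∫ u in (0 : ℝ)..1, Gpsi u ^ 2

variable {Ω : Type*} [MeasureSpace Ω]

/-- The diffusion `X_t = h(W_t)`. -/
def X (W : ℝ → Ω → ℝ) (h : ℝ → ℝ) (t : ℝ) (ω : Ω) : ℝ := h (W t ω)

/-- The rounded observation `X^{(α_n)}_{i/n}`. -/
def Xr (W : ℝ → Ω → ℝ) (h : ℝ → ℝ) (α : ℕ → ℝ) (n i : ℕ) (ω : Ω) : ℝ :=
  rnd (α n) (h (W ((i : ℝ) / n) ω))

/-- `θ = ∫₀¹ g(X_s)² σ(X_s)² ds`. -/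
def theta (W : ℝ → Ω → ℝ) (h σ g : ℝ → ℝ) (ω : Ω) : ℝ :=
  ∫ s in (0 : ℝ)..1, g (h (W s ω)) ^ 2 * σ (h (W s ω)) ^ 2

/-- `ĉ_{jk}`. -/
def chat (W : ℝ → Ω → ℝ) (h : ℝ → ℝ) (α : ℕ → ℝ) (g : ℝ → ℝ) (n j k : ℕ) (ω : Ω) : ℝ :=
  Real.sqrt (π / 2) * (2 : ℝ) ^ ((j : ℝ) / 2) / Real.sqrt n *
    ∑ i ∈ Finset.Icc 1 n, ind j k ((i : ℝ) / n) * g (Xr W h α n (i - 1) ω) *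
      |Xr W h α n i ω - Xr W h α n (i - 1) ω|

/-- `d̂_{jk}`. -/
def dhat (W : ℝ → Ω → ℝ) (h : ℝ → ℝ) (α : ℕ → ℝ) (g : ℝ → ℝ) (n j k : ℕ) (ω : Ω) : ℝ :=
  Real.sqrt (π / 2) / Real.sqrt n *
    ∑ i ∈ Finset.Icc 1 n, psijk j k ((i : ℝ) / n) * g (Xr W h α n (i - 1) ω) *
      |Xr W h α n i ω - Xr W h α n (i - 1) ω|

/-- `Q̂_j = Σ_k d̂_{jk}²`. -/
def Qhat (W : ℝ → Ω → ℝ) (h : ℝ → ℝ) (α : ℕ → ℝ) (g : ℝ → ℝ) (n j : ℕ) (ω : Ω) : ℝ :=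
  ∑ k ∈ Finset.range (2 ^ j), dhat W h α g n j k ω ^ 2

/-- `ê_{jk}`. -/
def ehat (W : ℝ → Ω → ℝ) (h : ℝ → ℝ) (α : ℕ → ℝ) (g : ℝ → ℝ) (n j k : ℕ) (ω : Ω) : ℝ :=
  Real.sqrt (π / 2) * (2 : ℝ) ^ ((j : ℝ) / 2) / Real.sqrt n *
    ∑ i ∈ Finset.Icc 1 n, ind j k ((i : ℝ) / n) *
      Real.sqrt |g (Xr W h α n (i - 1) ω) * deriv g (Xr W h α n (i - 1) ω)| *
      |Xr W h α n i ω - Xr W h α n (i - 1) ω|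

/-- `j_{0,n} = ⌊log₂ (min (α_n⁻¹, √n))⌋`. -/
def j0 (α : ℕ → ℝ) (n : ℕ) : ℕ := (⌊Real.logb 2 (min (α n)⁻¹ (Real.sqrt n))⌋).toNat

/-- The first estimator `θ̃_n`. -/
def thetaTilde (W : ℝ → Ω → ℝ) (h : ℝ → ℝ) (α : ℕ → ℝ) (g : ℝ → ℝ) (n : ℕ) (ω : Ω) : ℝ :=
  ∑ k ∈ Finset.range (2 ^ j0 α n), chat W h α g n (j0 α n) k ω ^ 2

/-- `⌊(1+a) log₂ r_n⁻¹⌋`. -/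
def jmax (α : ℕ → ℝ) (a : ℝ) (n : ℕ) : ℕ := (⌊(1 + a) * Real.logb 2 (rr α n)⁻¹⌋).toNat

/-- `R_n(S)`. -/
def Rn (W : ℝ → Ω → ℝ) (h : ℝ → ℝ) (α : ℕ → ℝ) (g : ℝ → ℝ) (j1 j2 : ℕ → ℕ) (a : ℝ)
    (n : ℕ) (ω : Ω) : ℝ :=
  ∑ j ∈ Finset.Icc (j1 n) (jmax α a n), (2 : ℝ) ^ ((j2 n : ℤ) - (j : ℤ)) * Qhat W h α g n (j2 n) ω

open Classical in
/-- `1_{g' ≥ 0} - 1_{g' ≤ 0}`. -/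
def sgnFactor (g : ℝ → ℝ) : ℝ :=
  (if ∀ x, 0 ≤ deriv g x then (1 : ℝ) else 0) - (if ∀ x, deriv g x ≤ 0 then (1 : ℝ) else 0)

/-- Membership of `(a, j1, j2)` in the set `𝒮`. -/
def inS (α : ℕ → ℝ) (a : ℝ) (j1 j2 : ℕ → ℕ) : Prop :=
  0 < a ∧ a < 1 ∧ (∃ C, ∀ n : ℕ, α n ^ (1 - a) * Real.log n ^ 2 ≤ C) ∧
  Tendsto (fun n => rr α n * (2 : ℝ) ^ (2 * (j2 n : ℤ) - (j1 n : ℤ))) atTop (nhds 0) ∧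
  Tendsto (fun n : ℕ =>
    (rr α n)⁻¹ * (2 : ℝ) ^ ((j1 n : ℝ) / 2) * (α n ^ 2 * Real.log n + 1 / n)) atTop (nhds 0) ∧
  Tendsto (fun n => rr α n * (2 : ℝ) ^ (j1 n)) atTop (nhds 0) ∧
  Tendsto (fun n => (rr α n)⁻¹ * (2 : ℝ) ^ (-(3 * (j1 n : ℝ)) / 2)) atTop (nhds 0) ∧
  Tendsto (fun n => (2 : ℝ) ^ ((j2 n : ℤ) - (j1 n : ℤ))) atTop (nhds 0) ∧
  Tendsto (fun n => (rr α n)⁻¹ * (2 : ℝ) ^ (-((j1 n : ℝ) + (j2 n : ℝ) / 2))) atTop (nhds 0)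

/-- The compensated estimator `θ̂_n(S)`. -/
def thetaHat (W : ℝ → Ω → ℝ) (h : ℝ → ℝ) (α : ℕ → ℝ) (g : ℝ → ℝ) (j1 j2 : ℕ → ℕ) (a : ℝ)
    (n : ℕ) (ω : Ω) : ℝ :=
  (∑ k ∈ Finset.range (2 ^ j1 n), chat W h α g n (j1 n) k ω ^ 2) + Rn W h α g j1 j2 a n ω +
    α n * sgnFactor g * ∑ k ∈ Finset.range (2 ^ j0 α n), ehat W h α g n (j0 α n) k ω ^ 2

/-! Kernels and sampling functions -/

/-- `S(x) = ∫₀ˣ dy / σ(y)`. -/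
def Sfun (σ : ℝ → ℝ) (x : ℝ) : ℝ := ∫ y in (0 : ℝ)..x, (σ y)⁻¹

/-- The transition density `p_t(x,y)` of `X`. -/
def pker (σ : ℝ → ℝ) (t x y : ℝ) : ℝ :=
  (σ y)⁻¹ * (Real.sqrt (2 * π * t))⁻¹ * Real.exp (-(Sfun σ y - Sfun σ x) ^ 2 / (2 * t))

/-- `q_t(x,y) = p_t(x, x+y)`. -/
def qker (σ : ℝ → ℝ) (t x y : ℝ) : ℝ := pker σ t x (x + y)

/-- Density of a centered Gaussian with standard deviation `s`. -/
def gaussDensity (s y : ℝ) : ℝ :=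
  (Real.sqrt (2 * π * s ^ 2))⁻¹ * Real.exp (-(y ^ 2) / (2 * s ^ 2))

/-- `mf(x,u) = ∫ h_{σ(x)}(y) f(x,u,y) dy`. -/
def mF (σ : ℝ → ℝ) (f : ℝ → ℝ → ℝ → ℝ) (x u : ℝ) : ℝ := ∫ y, gaussDensity (σ x) y * f x u y

/-- `Mf(x) = ∫₀¹ mf(x,u) du`. -/
def MF (σ : ℝ → ℝ) (f : ℝ → ℝ → ℝ → ℝ) (x : ℝ) : ℝ := ∫ u in (0 : ℝ)..1, mF σ f x u

/-- `m_n f(x,u) = ∫ q_{1/n}(x,y) f(x,u,√n y) dy`. -/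
def mn (σ : ℝ → ℝ) (f : ℝ → ℝ → ℝ → ℝ) (n : ℕ) (x u : ℝ) : ℝ :=
  ∫ y, qker σ (1 / n) x y * f x u (Real.sqrt n * y)

/-- `M_n f(x) = ∫₀¹ m_n f(x,u) du`. -/
def Mnf (σ : ℝ → ℝ) (f : ℝ → ℝ → ℝ → ℝ) (n : ℕ) (x : ℝ) : ℝ :=
  ∫ u in (0 : ℝ)..1, mn σ f n x u

/-- `\bar m_n f(x) = m_n f(x,{x/α_n}) - M_n f(x)`. -/
def mbar (σ : ℝ → ℝ) (α : ℕ → ℝ) (f : ℝ → ℝ → ℝ → ℝ) (n : ℕ) (x : ℝ) : ℝ :=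
  mn σ f n x (Int.fract (x / α n)) - Mnf σ f n x

/-- `l_i^n f(x) = ∫ p_{i/n}(x,y) \bar m_n f(y) dy`. -/
def lin (σ : ℝ → ℝ) (α : ℕ → ℝ) (f : ℝ → ℝ → ℝ → ℝ) (n i : ℕ) (x : ℝ) : ℝ :=
  ∫ y, pker σ ((i : ℝ) / n) x y * mbar σ α f n y

/-- Assumption E with explicit constant `γ`. -/
def AssumptionEWith (bβ : ℕ → ℝ) (γ : ℝ) (f : ℕ → ℝ → ℝ → ℝ → ℝ) : Prop :=
  0 < γ ∧
  (∀ n u y, ContDiff ℝ 2 fun x => f n x u y) ∧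
  ∀ n : ℕ,
    (∀ x u y, |f n x u y| ≤ γ * (1 + bβ n ^ 2) * (1 + |y| ^ γ)) ∧
    (∀ x y, (∫ u in (0 : ℝ)..1, |f n x u y|) ≤ γ * (1 + |y| ^ γ)) ∧
    (∀ i : ℕ, 1 ≤ i → i ≤ 2 → ∀ x u y,
      |iteratedDeriv i (fun x => f n x u y) x| ≤ γ * (1 + bβ n ^ 2) * (1 + |y| ^ γ)) ∧
    (∀ i : ℕ, 1 ≤ i → i ≤ 2 → ∀ x y,
      (∫ u in (0 : ℝ)..1, |iteratedDeriv i (fun x => f n x u y) x|) ≤ γ * (1 + |y| ^ γ))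

/-- Assumption E. -/
def AssumptionE (bβ : ℕ → ℝ) (f : ℕ → ℝ → ℝ → ℝ → ℝ) : Prop :=
  ∃ γ, AssumptionEWith bβ γ f

/-- `V^{jk}(n, f)` for a sampling function `f(x,u,y)`. -/
def Vjk (W : ℝ → Ω → ℝ) (h : ℝ → ℝ) (α : ℕ → ℝ) (f : ℝ → ℝ → ℝ → ℝ) (n j k : ℕ)
    (ω : Ω) : ℝ :=
  (2 : ℝ) ^ ((j : ℝ) / 2) / n * ∑ i ∈ Finset.Icc 1 n, ind j k ((i : ℝ) / n) *
    f (h (W (((i : ℝ) - 1) / n) ω)) (Int.fract (h (W (((i : ℝ) - 1) / n) ω) / α n))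
      (Real.sqrt n * (h (W ((i : ℝ) / n) ω) - h (W (((i : ℝ) - 1) / n) ω)))

/-- `V^{jk}(n, G)` for a function `G` of `x` alone. -/
def VjkX (W : ℝ → Ω → ℝ) (h : ℝ → ℝ) (G : ℝ → ℝ) (n j k : ℕ) (ω : Ω) : ℝ :=
  (2 : ℝ) ^ ((j : ℝ) / 2) / n * ∑ i ∈ Finset.Icc 1 n, ind j k ((i : ℝ) / n) *
    G (h (W (((i : ℝ) - 1) / n) ω))

/-- The natural filtration of `W` at time `t`. -/
def filt (W : ℝ → Ω → ℝ) (t : ℝ) : MeasurableSpace Ω :=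
  ⨆ s ∈ Set.Icc (0 : ℝ) t, MeasurableSpace.comap (W s) inferInstance

/-- `f_i^n`. -/
def fF (W : ℝ → Ω → ℝ) (h : ℝ → ℝ) (α : ℕ → ℝ) (f : ℝ → ℝ → ℝ → ℝ) (n i : ℕ) (ω : Ω) : ℝ :=
  f (h (W (((i : ℝ) - 1) / n) ω)) (Int.fract (h (W (((i : ℝ) - 1) / n) ω) / α n))
    (Real.sqrt n * (h (W ((i : ℝ) / n) ω) - h (W (((i : ℝ) - 1) / n) ω)))

/-- `η_i^n = f_i^n - M_n f_n(X_{(i-1)/n})`. -/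
def eta (W : ℝ → Ω → ℝ) (h σ : ℝ → ℝ) (α : ℕ → ℝ) (f : ℝ → ℝ → ℝ → ℝ) (n i : ℕ)
    (ω : Ω) : ℝ :=
  fF W h α f n i ω - Mnf σ f n (h (W (((i : ℝ) - 1) / n) ω))

/-- `δ_i^n(f, l)`. -/
def delta (W : ℝ → Ω → ℝ) (h σ : ℝ → ℝ) (α : ℕ → ℝ) (f : ℝ → ℝ → ℝ → ℝ) (n l i : ℕ)
    (ω : Ω) : ℝ :=
  ∑ z ∈ Finset.Icc i (min n (i + l - 1)),
    (MeasureTheory.condExp (filt W ((i : ℝ) / n)) ℙ (eta W h σ α f n z) ω -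
     MeasureTheory.condExp (filt W (((i : ℝ) - 1) / n)) ℙ (eta W h σ α f n z) ω)

/-- `𝓜_{jk}^n(f, l)`. -/
def Mjk (W : ℝ → Ω → ℝ) (h σ : ℝ → ℝ) (α : ℕ → ℝ) (f : ℝ → ℝ → ℝ → ℝ) (n l j k : ℕ)
    (ω : Ω) : ℝ :=
  (2 : ℝ) ^ ((j : ℝ) / 2) / n * ∑ i ∈ Finset.Icc 1 n, ind j k ((i : ℝ) / n) *
    delta W h σ α f n l i ω

/-- `s_{jk} = {2^{-j} n k + 1, …, 2^{-j} n (k+1)}`. -/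
def sjk (n j k : ℕ) : Finset ℕ := Finset.Icc (n / 2 ^ j * k + 1) (n / 2 ^ j * (k + 1))

/-- `H_{jk}^n(f, l)`. -/
def Hjk (W : ℝ → Ω → ℝ) (h σ : ℝ → ℝ) (α : ℕ → ℝ) (f : ℝ → ℝ → ℝ → ℝ) (n l j k : ℕ)
    (ω : Ω) : ℝ :=
  (2 : ℝ) ^ ((j : ℝ) / 2) / n * (∑ i ∈ sjk n j k,
      (mbar σ α f n (h (W ((i : ℝ) / n) ω)) - mbar σ α f n (h (W (((i : ℝ) - 1) / n) ω)))) -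
  (2 : ℝ) ^ ((j : ℝ) / 2) / n * ∑ i ∈ sjk n j k,
      (if 2 ≤ min (n - i) (l - 1) then
        lin σ α f n (min (n - i) (l - 1)) (h (W (((i : ℝ) - 1) / n) ω)) else 0)

/-- `K_{jk}^n(f, l)`. -/
def Kjk (W : ℝ → Ω → ℝ) (h σ : ℝ → ℝ) (α : ℕ → ℝ) (f : ℝ → ℝ → ℝ → ℝ) (n l j k : ℕ)
    (ω : Ω) : ℝ :=
  (2 : ℝ) ^ ((j : ℝ) / 2) / n * ∑ i ∈ sjk n j k, ∑ z ∈ Finset.Icc 1 (min (n - i - 1) (l - 2)),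
    (lin σ α f n z (h (W ((i : ℝ) / n) ω)) - lin σ α f n z (h (W (((i : ℝ) - 1) / n) ω)))

/-- Coefficient `c_{jk}` of `s ↦ g(X_s)σ(X_s)` on the Haar scaling functions. -/
def cjk (W : ℝ → Ω → ℝ) (h σ g : ℝ → ℝ) (j k : ℕ) (ω : Ω) : ℝ :=
  (2 : ℝ) ^ ((j : ℝ) / 2) * ∫ s in (0 : ℝ)..1, ind j k s * (g (h (W s ω)) * σ (h (W s ω)))

/-- Coefficient `d_{jk}` of `s ↦ g(X_s)σ(X_s)` in the Haar basis. -/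
def djk (W : ℝ → Ω → ℝ) (h σ g : ℝ → ℝ) (j k : ℕ) (ω : Ω) : ℝ :=
  ∫ s in (0 : ℝ)..1, psijk j k s * (g (h (W s ω)) * σ (h (W s ω)))

/-- The specific sampling function `f_n(x,u,y) = √(π/2) β_n |⌊u + y/β_n⌋|`. -/
def fSpec (α : ℕ → ℝ) (n : ℕ) (x u y : ℝ) : ℝ :=
  Real.sqrt (π / 2) * beta α n * |(⌊u + y / beta α n⌋ : ℤ)|

/-- `q_i^n = √(π/2) n^{-1/2} |X^{(α_n)}_{i/n} - X^{(α_n)}_{(i-1)/n}|` (case g = 1). -/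
def qin (W : ℝ → Ω → ℝ) (h : ℝ → ℝ) (α : ℕ → ℝ) (n i : ℕ) (ω : Ω) : ℝ :=
  Real.sqrt (π / 2) / Real.sqrt n * |Xr W h α n i ω - Xr W h α n (i - 1) ω|

/-- `z_i^n = q_i^n - ∫_{(i-1)/n}^{i/n} σ(X_s) ds`. -/
def zin (W : ℝ → Ω → ℝ) (h σ : ℝ → ℝ) (α : ℕ → ℝ) (n i : ℕ) (ω : Ω) : ℝ :=
  qin W h α n i ω - ∫ s in (((i : ℝ) - 1) / n)..((i : ℝ) / n), σ (h (W s ω))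

lemma lintegral_sq_gaussianReal (v : ℝ≥0) :
    ∫⁻ x, ENNReal.ofReal (x ^ 2) ∂gaussianReal 0 v = v := by
  have hint : Integrable (fun x : ℝ => x ^ 2) (gaussianReal 0 v) :=
    (memLp_id_gaussianReal 2).integrable_sq
  have hsecond : ∫ x, x ^ 2 ∂gaussianReal 0 v = v := by
    rw [← variance_of_integral_eq_zero measurable_id'.aemeasurable integral_id_gaussianReal,
      variance_fun_id_gaussianReal]
  rw [← ofReal_integral_eq_lintegral_ofReal hint (ae_of_all _ fun x => sq_nonneg x), hsecond,
    ENNReal.ofReal_coe_nnreal]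

lemma IsStdBM.lintegral_sq_sub {W : ℝ → Ω → ℝ} (hW : IsStdBM W) {s t : ℝ} (hs : 0 ≤ s)
    (hst : s ≤ t) : ∫⁻ ω, ENNReal.ofReal ((W t ω - W s ω) ^ 2) = ENNReal.ofReal (t - s) := by
  have hmeas : Measurable fun ω => W t ω - W s ω := (hW.1 t).sub (hW.1 s)
  rw [← lintegral_map (f := fun x : ℝ => ENNReal.ofReal (x ^ 2)) (by fun_prop) hmeas,
    hW.2.2.2.1 s t hs hst, lintegral_sq_gaussianReal]
  rfl

lemma IsStdBM.lintegral_setLIntegral_sq_sub_le [SFinite (ℙ : Measure Ω)] {W : ℝ → Ω → ℝ}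
    (hW : IsStdBM W) {a b : ℝ} (ha : 0 ≤ a) (hab : a ≤ b) :
    ∫⁻ ω, ∫⁻ s in Set.Ioc a b, ENNReal.ofReal ((W s ω - W a ω) ^ 2) ≤
      ENNReal.ofReal ((b - a) ^ 2) := by
  have hW2 : Measurable (Function.uncurry W) :=
    measurable_uncurry_of_continuous_of_measurable hW.2.2.1 hW.1
  have hmeas : Measurable (Function.uncurry fun ω s => ENNReal.ofReal ((W s ω - W a ω) ^ 2)) :=
    (((hW2.comp measurable_swap).sub ((hW.1 a).comp measurable_fst)).pow_const 2).ennreal_ofReal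
  calc ∫⁻ ω, ∫⁻ s in Set.Ioc a b, ENNReal.ofReal ((W s ω - W a ω) ^ 2)
      = ∫⁻ s in Set.Ioc a b, ∫⁻ ω, ENNReal.ofReal ((W s ω - W a ω) ^ 2) :=
        lintegral_lintegral_swap hmeas.aemeasurable
    _ ≤ ∫⁻ s in Set.Ioc a b, ENNReal.ofReal (b - a) := by
        refine setLIntegral_mono measurable_const fun s hs => ?_
        rw [hW.lintegral_sq_sub ha hs.1.le]
        exact ENNReal.ofReal_le_ofReal (by linarith [hs.2])
    _ = ENNReal.ofReal ((b - a) ^ 2) := by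
        rw [setLIntegral_const, Real.volume_Ioc, ← ENNReal.ofReal_mul (by linarith), sq]

lemma sq_lintegral_le_measure_mul_lintegral_sq {α : Type*} [MeasurableSpace α] (μ : Measure α)
    {f : α → ℝ≥0∞} (hf : AEMeasurable f μ) :
    (∫⁻ a, f a ∂μ) ^ 2 ≤ μ Set.univ * ∫⁻ a, f a ^ 2 ∂μ := by
  have hsqrt_sq : ∀ A : ℝ≥0∞, (A ^ (2⁻¹ : ℝ)) ^ 2 = A := fun A => by
    rw [← ENNReal.rpow_natCast, ← ENNReal.rpow_mul]; norm_num
  have holder := ENNReal.lintegral_mul_le_Lp_mul_Lq μ Real.HolderConjugate.two_two hf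
    aemeasurable_const (g := fun _ => 1)
  simp only [Pi.mul_apply, mul_one, lintegral_const, ENNReal.rpow_two, one_pow, one_mul,
    one_div] at holder
  calc (∫⁻ a, f a ∂μ) ^ 2
      ≤ ((∫⁻ a, f a ^ 2 ∂μ) ^ (2⁻¹ : ℝ) * μ Set.univ ^ (2⁻¹ : ℝ)) ^ 2 := by gcongr
    _ = μ Set.univ * ∫⁻ a, f a ^ 2 ∂μ := by rw [mul_pow, hsqrt_sq, hsqrt_sq, mul_comm]

lemma sq_two_rpow_half (j : ℕ) : ((2 : ℝ) ^ ((j : ℝ) / 2)) ^ 2 = 2 ^ j := by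
  rw [← Real.rpow_natCast, ← Real.rpow_mul zero_le_two]
  norm_num

lemma add_one_div_two_pow_sub_div_two_pow (j k : ℕ) :
    ((k : ℝ) + 1) / 2 ^ j - (k : ℝ) / 2 ^ j = (2 ^ j)⁻¹ := by
  field_simp
  ring

lemma ind_mul_eq_indicator (j k : ℕ) (F : ℝ → ℝ) (s : ℝ) :
    ind j k s * F s = (Set.Ioc ((k : ℝ) / 2 ^ j) (((k : ℝ) + 1) / 2 ^ j)).indicator F s := by
  by_cases hs : s ∈ Set.Ioc ((k : ℝ) / 2 ^ j) (((k : ℝ) + 1) / 2 ^ j) <;> simp [ind, hs]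

lemma sq_rpow_mul_integral_ind_mul_le {F : ℝ → ℝ} {M : ℝ} (hF : ∀ s, |F s| ≤ M) (j k : ℕ) :
    ((2 : ℝ) ^ ((j : ℝ) / 2) * ∫ s in (0 : ℝ)..1, ind j k s * F s) ^ 2 ≤
      M ^ 2 * 2 ^ (-(j : ℝ)) := by
  have hp : (0 : ℝ) < 2 ^ j := by positivity
  have hM : 0 ≤ M := (abs_nonneg _).trans (hF 0)
  set I := Set.Ioc ((k : ℝ) / 2 ^ j) (((k : ℝ) + 1) / 2 ^ j)
  have hvol : volume.real I = (2 ^ j)⁻¹ := by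
    rw [Real.volume_real_Ioc_of_le (by gcongr; linarith), add_one_div_two_pow_sub_div_two_pow]
  have hint : |∫ s in (0 : ℝ)..1, ind j k s * F s| ≤ M * (2 ^ j)⁻¹ := by
    simp_rw [ind_mul_eq_indicator, intervalIntegral.integral_of_le zero_le_one,
      setIntegral_indicator measurableSet_Ioc, ← Real.norm_eq_abs, ← hvol]
    refine (norm_setIntegral_le_of_norm_le_const (measure_lt_top_of_subset
      Set.inter_subset_right measure_Ioc_lt_top.ne) fun s _ => hF s).trans ?_
    gcongr
    exacts [measure_Ioc_lt_top.ne, Set.inter_subset_right]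
  rw [Real.rpow_neg zero_le_two, Real.rpow_natCast, mul_pow, sq_two_rpow_half, ← sq_abs]
  calc (2 : ℝ) ^ j * |∫ s in (0 : ℝ)..1, ind j k s * F s| ^ 2
      ≤ 2 ^ j * (M * (2 ^ j)⁻¹) ^ 2 := by gcongr
    _ = M ^ 2 * (2 ^ j)⁻¹ := by field_simp

lemma psijk_mul_eq_indicator (j k : ℕ) (F : ℝ → ℝ) (s : ℝ) :
    psijk j k s * F s = (2 : ℝ) ^ ((j : ℝ) / 2) *
      ((Set.Ioc (((k : ℝ) + 1 / 2) / 2 ^ j) (((k : ℝ) + 1) / 2 ^ j)).indicator F s -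
        (Set.Icc ((k : ℝ) / 2 ^ j) (((k : ℝ) + 1 / 2) / 2 ^ j)).indicator F s) := by
  have hp : (0 : ℝ) < 2 ^ j := by positivity
  have hright : (2 : ℝ) ^ j * s - k ∈ Set.Ioc (1 / 2 : ℝ) 1 ↔
      s ∈ Set.Ioc (((k : ℝ) + 1 / 2) / 2 ^ j) (((k : ℝ) + 1) / 2 ^ j) := by
    rw [Set.mem_Ioc, Set.mem_Ioc, div_lt_iff₀ hp, le_div_iff₀ hp]
    constructor <;> rintro ⟨h₁, h₂⟩ <;> constructor <;> linarith
  have hleft : (2 : ℝ) ^ j * s - k ∈ Set.Icc (0 : ℝ) (1 / 2) ↔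
      s ∈ Set.Icc ((k : ℝ) / 2 ^ j) (((k : ℝ) + 1 / 2) / 2 ^ j) := by
    rw [Set.mem_Icc, Set.mem_Icc, div_le_iff₀ hp, le_div_iff₀ hp]
    constructor <;> rintro ⟨h₁, h₂⟩ <;> constructor <;> linarith
  simp only [psijk, psi, Set.indicator_apply, hright, hleft, Pi.one_apply]
  split_ifs <;> ring

lemma integral_psijk_mul {j k : ℕ} (hk : k < 2 ^ j) {F : ℝ → ℝ}
    (hF : IntegrableOn F (Set.Ioc 0 1)) :
    ∫ s in (0 : ℝ)..1, psijk j k s * F s = (2 : ℝ) ^ ((j : ℝ) / 2) *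
      ((∫ s in Set.Ioc (((k : ℝ) + 1 / 2) / 2 ^ j) (((k : ℝ) + 1) / 2 ^ j), F s) -
        ∫ s in Set.Ioc ((k : ℝ) / 2 ^ j) (((k : ℝ) + 1 / 2) / 2 ^ j), F s) := by
  have hp : (0 : ℝ) < 2 ^ j := by positivity
  set a := (k : ℝ) / 2 ^ j
  set m := ((k : ℝ) + 1 / 2) / 2 ^ j
  set b := ((k : ℝ) + 1) / 2 ^ j
  have ha : 0 ≤ a := by positivity
  have ham : a ≤ m := div_le_div_of_nonneg_right (by linarith) hp.le
  have hmb : m ≤ b := div_le_div_of_nonneg_right (by linarith) hp.le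
  have hb : b ≤ 1 := by rw [div_le_one hp]; exact_mod_cast hk
  simp_rw [psijk_mul_eq_indicator, intervalIntegral.integral_const_mul,
    intervalIntegral.integral_of_le zero_le_one]
  rw [integral_sub (hF.indicator measurableSet_Ioc) (hF.indicator measurableSet_Icc),
    setIntegral_indicator measurableSet_Ioc, setIntegral_indicator measurableSet_Icc,
    Set.inter_eq_self_of_subset_right (Set.Ioc_subset_Ioc (ha.trans ham) hb)]
  congr 2
  refine setIntegral_congr_set ?_
  have hleft : Set.Ioc (0 : ℝ) 1 ∩ Set.Ioc a m = Set.Ioc a m :=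
    Set.inter_eq_self_of_subset_right (Set.Ioc_subset_Ioc ha (hmb.trans hb))
  exact ((ae_eq_refl (Set.Ioc (0 : ℝ) 1)).inter Ioc_ae_eq_Icc.symm).trans hleft.eventuallyEq

lemma abs_setIntegral_Ioc_sub_setIntegral_Ioc_le {F : ℝ → ℝ} {a m b : ℝ} (ham : a ≤ m)
    (hmb : m ≤ b) (hmid : b - m = m - a) (hF : IntegrableOn F (Set.Ioc a b)) (c : ℝ) :
    |(∫ s in Set.Ioc m b, F s) - ∫ s in Set.Ioc a m, F s| ≤ ∫ s in Set.Ioc a b, |F s - c| := by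
  have hFr : IntegrableOn F (Set.Ioc m b) := hF.mono_set (Set.Ioc_subset_Ioc_left ham)
  have hFl : IntegrableOn F (Set.Ioc a m) := hF.mono_set (Set.Ioc_subset_Ioc_right hmb)
  have hconst : ∀ x y : ℝ, IntegrableOn (fun _ => c) (Set.Ioc x y) := fun _ _ =>
    integrableOn_const measure_Ioc_lt_top.ne
  -- the constant `c` cancels because the two halves have the same length
  have hcentre : (∫ s in Set.Ioc m b, F s) - ∫ s in Set.Ioc a m, F s =
      (∫ s in Set.Ioc m b, (F s - c)) - ∫ s in Set.Ioc a m, (F s - c) := by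
    rw [integral_sub hFr (hconst _ _), integral_sub hFl (hconst _ _), setIntegral_const,
      setIntegral_const, Real.volume_real_Ioc_of_le hmb, Real.volume_real_Ioc_of_le ham, hmid]
    ring
  have habs : ∀ {x y : ℝ}, IntegrableOn F (Set.Ioc x y) →
      IntegrableOn (fun s => |F s - c|) (Set.Ioc x y) := fun h => (h.sub (hconst _ _)).abs
  rw [hcentre, ← Set.Ioc_union_Ioc_eq_Ioc ham hmb, setIntegral_union
    (Set.Ioc_disjoint_Ioc_of_le le_rfl) measurableSet_Ioc (habs hFl) (habs hFr)]
  calc |(∫ s in Set.Ioc m b, (F s - c)) - ∫ s in Set.Ioc a m, (F s - c)|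
      ≤ |∫ s in Set.Ioc m b, (F s - c)| + |∫ s in Set.Ioc a m, (F s - c)| := abs_sub _ _
    _ ≤ (∫ s in Set.Ioc m b, |F s - c|) + ∫ s in Set.Ioc a m, |F s - c| :=
        add_le_add abs_integral_le_integral_abs abs_integral_le_integral_abs
    _ = (∫ s in Set.Ioc a m, |F s - c|) + ∫ s in Set.Ioc m b, |F s - c| := add_comm _ _

lemma lipschitzWith_of_abs_deriv_le {f : ℝ → ℝ} {C : ℝ} (hf : Differentiable ℝ f)
    (hC : ∀ x, |deriv f x| ≤ C) : LipschitzWith C.toNNReal f :=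
  lipschitzWith_of_nnnorm_deriv_le hf fun x => by
    rw [← NNReal.coe_le_coe, coe_nnnorm, Real.norm_eq_abs]
    exact (hC x).trans (Real.le_coe_toNNReal C)

lemma AssumptionCp.exists_abs_mul_le {σ g : ℝ → ℝ} (hC : AssumptionCp g) (hB : AssumptionBp σ) :
    ∃ M, ∀ x, |g x * σ x| ≤ M := by
  obtain ⟨-, ⟨Cg, hCg⟩, -⟩ := hC
  obtain ⟨-, ⟨Cσ, hCσ⟩, -⟩ := hB
  refine ⟨Cg * Cσ, fun x => ?_⟩
  rw [abs_mul]
  exact mul_le_mul (hCg x).1 (hCσ x).1 (abs_nonneg _) ((abs_nonneg _).trans (hCg x).1)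

lemma AssumptionCp.exists_lipschitzWith_comp {σ g h : ℝ → ℝ} {x₀ : ℝ} (hC : AssumptionCp g)
    (hB : AssumptionBp σ) (hD : IsScaleFun σ x₀ h) :
    ∃ L, LipschitzWith L fun w => g (h w) * σ (h w) := by
  obtain ⟨hgC, ⟨Cg, hCg⟩, -⟩ := hC
  obtain ⟨hσC, ⟨Cσ, hCσ⟩, -⟩ := hB
  have hg : Differentiable ℝ g := hgC.differentiable (by norm_num)
  have hσ : Differentiable ℝ σ := hσC.differentiable (by norm_num)
  have hh : LipschitzWith Cσ.toNNReal h :=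
    lipschitzWith_of_abs_deriv_le (fun x => (hD.2 x).differentiableAt) fun x => by
      rw [(hD.2 x).deriv]
      exact (hCσ _).1
  have hgσ : LipschitzWith (2 * Cg * Cσ).toNNReal fun x => g x * σ x :=
    lipschitzWith_of_abs_deriv_le (hg.mul hσ) fun x => by
      rw [deriv_fun_mul (hg x) (hσ x)]
      obtain ⟨hg₀, hg₁, -⟩ := hCg x
      obtain ⟨hσ₀, hσ₁, -⟩ := hCσ x
      calc |deriv g x * σ x + g x * deriv σ x|
          ≤ |deriv g x| * |σ x| + |g x| * |deriv σ x| := by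
            rw [← abs_mul, ← abs_mul]; exact abs_add_le _ _
        _ ≤ Cg * Cσ + Cg * Cσ := by
            have hCg₀ : 0 ≤ Cg := (abs_nonneg _).trans hg₀
            gcongr
        _ = 2 * Cg * Cσ := by ring
  exact ⟨_, hgσ.comp hh⟩


lemma abs_integral_psijk_mul_comp_le {φ : ℝ → ℝ} {L : ℝ≥0} (hφ : LipschitzWith L φ)
    {w : ℝ → ℝ} (hw : Continuous w) {j k : ℕ} (hk : k < 2 ^ j) :
    |∫ s in (0 : ℝ)..1, psijk j k s * φ (w s)| ≤ (2 : ℝ) ^ ((j : ℝ) / 2) *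
      (L * ∫ s in Set.Ioc ((k : ℝ) / 2 ^ j) (((k : ℝ) + 1) / 2 ^ j),
        |w s - w ((k : ℝ) / 2 ^ j)|) := by
  have hp : (0 : ℝ) < 2 ^ j := by positivity
  set a := (k : ℝ) / 2 ^ j
  set b := ((k : ℝ) + 1) / 2 ^ j
  have hF : Continuous fun s => φ (w s) := hφ.continuous.comp hw
  rw [integral_psijk_mul hk hF.integrableOn_Ioc, abs_mul,
    abs_of_pos (Real.rpow_pos_of_pos two_pos _)]
  gcongr
  calc _ ≤ ∫ s in Set.Ioc a b, |φ (w s) - φ (w a)| :=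
        abs_setIntegral_Ioc_sub_setIntegral_Ioc_le (div_le_div_of_nonneg_right (by linarith) hp.le)
          (div_le_div_of_nonneg_right (by linarith) hp.le) (by ring) hF.integrableOn_Ioc _
    _ ≤ ∫ s in Set.Ioc a b, L * |w s - w a| :=
        setIntegral_mono_on (hF.sub continuous_const).abs.integrableOn_Ioc
          (continuous_const.mul (hw.sub continuous_const).abs).integrableOn_Ioc
          measurableSet_Ioc fun s _ => by simpa only [← Real.dist_eq] using hφ.dist_le_mul _ _
    _ = L * ∫ s in Set.Ioc a b, |w s - w a| := integral_const_mul _ _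

lemma ofReal_sq_integral_psijk_mul_comp_le {φ : ℝ → ℝ} {L : ℝ≥0} (hφ : LipschitzWith L φ)
    {w : ℝ → ℝ} (hw : Continuous w) {j k : ℕ} (hk : k < 2 ^ j) :
    ENNReal.ofReal ((∫ s in (0 : ℝ)..1, psijk j k s * φ (w s)) ^ 2) ≤
      ENNReal.ofReal ((L : ℝ) ^ 2) * ∫⁻ s in Set.Ioc ((k : ℝ) / 2 ^ j) (((k : ℝ) + 1) / 2 ^ j),
        ENNReal.ofReal ((w s - w ((k : ℝ) / 2 ^ j)) ^ 2) := by
  have hp : (0 : ℝ) < 2 ^ j := by positivity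
  have hlen := add_one_div_two_pow_sub_div_two_pow j k
  set a := (k : ℝ) / 2 ^ j
  set b := ((k : ℝ) + 1) / 2 ^ j
  have hY : Continuous fun s => |w s - w a| := (hw.sub continuous_const).abs
  set D := ∫ s in Set.Ioc a b, |w s - w a|
  have hD : 0 ≤ D := setIntegral_nonneg measurableSet_Ioc fun _ _ => abs_nonneg _
  have hcs : ENNReal.ofReal D ^ 2 ≤
      ENNReal.ofReal (2 ^ j)⁻¹ * ∫⁻ s in Set.Ioc a b, ENNReal.ofReal ((w s - w a) ^ 2) := by
    rw [ofReal_integral_eq_lintegral_ofReal hY.integrableOn_Ioc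
      (ae_of_all _ fun _ => abs_nonneg _)]
    refine (sq_lintegral_le_measure_mul_lintegral_sq _
      hY.measurable.ennreal_ofReal.aemeasurable).trans_eq ?_
    rw [Measure.restrict_apply_univ, Real.volume_Ioc, hlen]
    simp_rw [← ENNReal.ofReal_pow (abs_nonneg _), sq_abs]
  have habs := abs_integral_psijk_mul_comp_le hφ hw hk
  calc ENNReal.ofReal ((∫ s in (0 : ℝ)..1, psijk j k s * φ (w s)) ^ 2)
      ≤ ENNReal.ofReal (((2 : ℝ) ^ ((j : ℝ) / 2) * (L * D)) ^ 2) :=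
        ENNReal.ofReal_le_ofReal (sq_le_sq' (neg_le_of_abs_le habs) (le_of_abs_le habs))
    _ = ENNReal.ofReal (2 ^ j) * ENNReal.ofReal ((L : ℝ) ^ 2) * ENNReal.ofReal D ^ 2 := by
        rw [mul_pow, mul_pow, sq_two_rpow_half, ← mul_assoc, ENNReal.ofReal_mul (by positivity),
          ENNReal.ofReal_mul (by positivity), ENNReal.ofReal_pow hD]
    _ ≤ ENNReal.ofReal (2 ^ j) * ENNReal.ofReal ((L : ℝ) ^ 2) * (ENNReal.ofReal (2 ^ j)⁻¹ *
          ∫⁻ s in Set.Ioc a b, ENNReal.ofReal ((w s - w a) ^ 2)) := by gcongr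
    _ = ENNReal.ofReal ((L : ℝ) ^ 2) * ∫⁻ s in Set.Ioc a b, ENNReal.ofReal ((w s - w a) ^ 2) := by
        rw [mul_comm (ENNReal.ofReal (2 ^ j)), mul_assoc, ← mul_assoc (ENNReal.ofReal (2 ^ j)),
          ← ENNReal.ofReal_mul hp.le, mul_inv_cancel₀ hp.ne', ENNReal.ofReal_one, one_mul]

lemma IsStdBM.lintegral_djk_sq_le [SFinite (ℙ : Measure Ω)] {W : ℝ → Ω → ℝ} (hW : IsStdBM W)
    {σ g h : ℝ → ℝ} {L : ℝ≥0} (hL : LipschitzWith L fun x => g (h x) * σ (h x)) {j k : ℕ}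
    (hk : k < 2 ^ j) :
    ∫⁻ ω, ENNReal.ofReal (djk W h σ g j k ω ^ 2) ≤
      ENNReal.ofReal ((L : ℝ) ^ 2 * 2 ^ (-(2 * (j : ℝ)))) := by
  have hlen := add_one_div_two_pow_sub_div_two_pow j k
  set a := (k : ℝ) / 2 ^ j
  set b := ((k : ℝ) + 1) / 2 ^ j
  calc ∫⁻ ω, ENNReal.ofReal (djk W h σ g j k ω ^ 2)
      ≤ ∫⁻ ω, ENNReal.ofReal ((L : ℝ) ^ 2) *
          ∫⁻ s in Set.Ioc a b, ENNReal.ofReal ((W s ω - W a ω) ^ 2) :=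
        lintegral_mono fun ω => ofReal_sq_integral_psijk_mul_comp_le hL (hW.2.2.1 ω) hk
    _ = ENNReal.ofReal ((L : ℝ) ^ 2) *
          ∫⁻ ω, ∫⁻ s in Set.Ioc a b, ENNReal.ofReal ((W s ω - W a ω) ^ 2) :=
        lintegral_const_mul' _ _ ENNReal.ofReal_ne_top
    _ ≤ ENNReal.ofReal ((L : ℝ) ^ 2) * ENNReal.ofReal ((b - a) ^ 2) := by
        gcongr
        exact hW.lintegral_setLIntegral_sq_sub_le (by positivity)
          (sub_nonneg.1 (hlen ▸ by positivity))
    _ = ENNReal.ofReal ((L : ℝ) ^ 2 * 2 ^ (-(2 * (j : ℝ)))) := by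
        rw [← ENNReal.ofReal_mul (sq_nonneg _), hlen, Real.rpow_neg zero_le_two,
          show 2 * (j : ℝ) = ((2 * j : ℕ) : ℝ) by push_cast; ring, Real.rpow_natCast, pow_mul',
          inv_pow]

section Theorems

variable {Ω : Type*} [MeasureSpace Ω] [IsProbabilityMeasure (ℙ : Measure Ω)]

/-- Lemma 5. -/
theorem statement10 (W : ℝ → Ω → ℝ) (σ g h : ℝ → ℝ) (x₀ : ℝ)
    (hW : IsStdBM W) (hB : AssumptionBp σ) (hC : AssumptionCp g) (hD : IsScaleFun σ x₀ h) :
    ∃ c : ℝ,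
      (∀ j₀ k : ℕ, k < 2 ^ j₀ → ∀ ω, cjk W h σ g j₀ k ω ^ 2 ≤ c * (2:ℝ) ^ (-(j₀ : ℝ))) ∧
      ∀ j k : ℕ, k < 2 ^ j →
        ∫⁻ ω, ENNReal.ofReal (djk W h σ g j k ω ^ 2) ∂ℙ ≤
          ENNReal.ofReal (c * (2:ℝ) ^ (-(2 * (j : ℝ)))) := by
  obtain ⟨M, hM⟩ := hC.exists_abs_mul_le hB
  obtain ⟨L, hL⟩ := hC.exists_lipschitzWith_comp hB hD
  refine ⟨M ^ 2 + L ^ 2, fun j k _ ω => ?_, fun j k hk => ?_⟩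
  · calc cjk W h σ g j k ω ^ 2 ≤ M ^ 2 * 2 ^ (-(j : ℝ)) :=
          sq_rpow_mul_integral_ind_mul_le (fun s => hM (h (W s ω))) j k
      _ ≤ (M ^ 2 + L ^ 2) * 2 ^ (-(j : ℝ)) := by
          gcongr
          exact le_add_of_nonneg_right (sq_nonneg _)
  · refine (hW.lintegral_djk_sq_le hL hk).trans (ENNReal.ofReal_le_ofReal ?_)
    gcongr
    exact le_add_of_nonneg_left (sq_nonneg _)

end Theorems

end RoundOff
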